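/- Let R be an LM-system, l → r a rule with root pair (f, g), and s = f(s1,…,sm), t = g(t1,…,tn) terms all of whose proper subterms are R-irreducible. Then s and t are joinable modulo R if and only if s rewrites to t in one step using the rule l → r. -/

import Mathlib

/-! Basic first-order terms, positions, substitutions and rewriting. -/

inductive Term (F : Type) : Type
  | var : Nat → Term F
  | app : F → List (Term F) → Term F

namespace Term

def subst {F : Type} (σ : Nat → Term F) : Term F → Term F
  | var n => σ n
  | app f ts => app f (ts.attach.map fun ⟨t, _⟩ => t.subst σ)

def root {F : Type} : Term F → Option F
  | var _ => none
  | app f _ => some f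

def label {F : Type} : Term F → F ⊕ Nat
  | var n => Sum.inr n
  | app f _ => Sum.inl f

def IsVar {F : Type} : Term F → Prop
  | var _ => True
  | app _ _ => False

def varsL {F : Type} : Term F → List Nat
  | var n => [n]
  | app _ ts => (ts.attach.map fun ⟨t, _⟩ => t.varsL).flatten

end Term

abbrev Rule (F : Type) := Term F × Term F
abbrev TRS (F : Type) := Set (Rule F)

/-- `SubtermAt t p u` : the subterm of `t` at position `p` is `u`. -/
inductive SubtermAt {F : Type} : Term F → List Nat → Term F → Prop
  | here (t : Term F) : SubtermAt t [] t
  | there {f : F} {ts : List (Term F)} {i : Nat} {u : Term F} {p : List Nat} {v : Term F} :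
      ts[i]? = some u → SubtermAt u p v → SubtermAt (Term.app f ts) (i :: p) v

/-- `ReplaceAt t p v t'` : replacing the subterm of `t` at position `p` by `v` yields `t'`. -/
inductive ReplaceAt {F : Type} : Term F → List Nat → Term F → Term F → Prop
  | here (t u : Term F) : ReplaceAt t [] u u
  | there {f : F} {ts : List (Term F)} {i : Nat} {u : Term F} {p : List Nat} {v w : Term F} :
      ts[i]? = some u → ReplaceAt u p v w →
      ReplaceAt (Term.app f ts) (i :: p) v (Term.app f (ts.set i w))

variable {F : Type}

/-- One rewrite step using the given rule (at some position, with some substitution). -/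
def RuleStep (ρ : Rule F) (s t : Term F) : Prop :=
  ∃ (σ : Nat → Term F) (p : List Nat),
    SubtermAt s p (ρ.1.subst σ) ∧ ReplaceAt s p (ρ.2.subst σ) t

def OneStep (R : TRS F) (s t : Term F) : Prop := ∃ ρ ∈ R, RuleStep ρ s t

/-- A rewrite step at the root position. -/
def RootStep (R : TRS F) (s t : Term F) : Prop :=
  ∃ ρ ∈ R, ∃ σ : Nat → Term F, s = ρ.1.subst σ ∧ t = ρ.2.subst σ

def StarRW (R : TRS F) : Term F → Term F → Prop := Relation.ReflTransGen (OneStep R)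
def Plus (R : TRS F) : Term F → Term F → Prop := Relation.TransGen (OneStep R)
/-- Convertibility (the congruence / equational theory generated by `R`). -/
def Conv (R : TRS F) : Term F → Term F → Prop := Relation.EqvGen (OneStep R)
def Joinable (R : TRS F) (s t : Term F) : Prop := ∃ u, StarRW R s u ∧ StarRW R t u
def NormalForm (R : TRS F) (t : Term F) : Prop := ∀ u, ¬ OneStep R t u
/-- `t` is the `R`-normal form of `s`. -/
def NFof (R : TRS F) (s t : Term F) : Prop := StarRW R s t ∧ NormalForm R t
def Terminating (R : TRS F) : Prop := WellFounded (fun a b : Term F => OneStep R b a)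
def Confluent (R : TRS F) : Prop := ∀ s t u, StarRW R s t → StarRW R s u → Joinable R t u
def Convergent (R : TRS F) : Prop := Confluent R ∧ Terminating R

/-- every proper subterm is irreducible -/
def EpsIrreducible (R : TRS F) (t : Term F) : Prop :=
  ∀ p u, SubtermAt t p u → p ≠ [] → NormalForm R u

def InnermostRedex (R : TRS F) (t : Term F) : Prop :=
  EpsIrreducible R t ∧ ¬ NormalForm R t

/-- Forward-closed, via the one-step-to-normal-form characterization. -/
def FCclosed (R : TRS F) : Prop :=
  ∀ t, InnermostRedex R t → ∀ u, NFof R t u → OneStep R t u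

def Unifies (σ : Nat → Term F) (s t : Term F) : Prop := s.subst σ = t.subst σ

def IsMGU (σ : Nat → Term F) (s t : Term F) : Prop :=
  Unifies σ s t ∧ ∀ τ, Unifies τ s t → ∃ δ, ∀ x, τ x = (σ x).subst δ

def IsRenaming (ρ : Nat → Term F) : Prop :=
  ∃ f : Nat → Nat, Function.Injective f ∧ ∀ n, ρ n = Term.var (f n)

/-- Redundancy criterion for an oriented equation `e` whose right-hand side is
reachable from its left-hand side: some proper subterm of the lhs is reducible. -/
def Redundant (R : TRS F) (e : Rule F) : Prop :=
  ∃ p u, p ≠ ([] : List Nat) ∧ SubtermAt e.1 p u ∧ ¬ NormalForm R u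

/-- `R₁ ↝ R₂`: forward overlaps of rules of `R₂` (renamed apart) into
right-hand sides of rules of `R₁`, at non-variable positions, via an mgu. -/
def FStep (R₁ R₂ : TRS F) : TRS F :=
  { e | ∃ (l₁ r₁ l₂ r₂ : Term F) (ρ : Nat → Term F) (p : List Nat) (u : Term F)
          (σ : Nat → Term F) (r₁' : Term F),
      (l₁, r₁) ∈ R₁ ∧ (l₂, r₂) ∈ R₂ ∧ IsRenaming ρ ∧
      SubtermAt r₁ p u ∧ ¬ u.IsVar ∧ IsMGU σ u (l₂.subst ρ) ∧
      ReplaceAt r₁ p (r₂.subst ρ) r₁' ∧ e = (l₁.subst σ, r₁'.subst σ) }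

def FCiter (R : TRS F) : Nat → TRS F
  | 0 => R
  | k + 1 => FCiter R k ∪ { e | e ∈ FStep (FCiter R k) R ∧ ¬ Redundant (FCiter R k) e }

def FCinf (R : TRS F) : TRS F := ⋃ k, FCiter R k

/-- Forward-closed, via the forward-closure construction: `FC(R) = R`. -/
def ForwardClosedFC (R : TRS F) : Prop := FCinf R = R

/-- `RHS(R)`: `R` together with the conclusions of right-hand-side critical
pair inferences (second rule renamed apart). -/
def RHSset (R : TRS F) : TRS F :=
  R ∪ { e | ∃ (s t u₀ v₀ : Term F) (ρ σ : Nat → Term F), (s, t) ∈ R ∧ (u₀, v₀) ∈ R ∧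
        IsRenaming ρ ∧ IsMGU σ t (v₀.subst ρ) ∧
        s.subst σ ≠ (u₀.subst ρ).subst σ ∧ e = (s.subst σ, (u₀.subst ρ).subst σ) }

/-- the (unordered) pairs of root symbols of two equations coincide -/
def RootPairSimilar (e₁ e₂ : Rule F) : Prop :=
  (e₁.1.root = e₂.1.root ∧ e₁.2.root = e₂.2.root) ∨
  (e₁.1.root = e₂.2.root ∧ e₁.2.root = e₂.1.root)

def QuasiDet (E : TRS F) : Prop :=
  (∀ e ∈ E, ¬ e.1.IsVar ∧ ¬ e.2.IsVar) ∧
  (∀ e ∈ E, e.1.root ≠ e.2.root) ∧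
  (∀ e₁ ∈ E, ∀ e₂ ∈ E, e₁ ≠ e₂ → ¬ RootPairSimilar e₁ e₂)

def HasRootPairRepetition (E : TRS F) : Prop :=
  ∃ e₁ ∈ E, ∃ e₂ ∈ E, e₁ ≠ e₂ ∧ RootPairSimilar e₁ e₂

def VarPreserving (R : TRS F) : Prop :=
  ∀ e ∈ R, ∀ n, n ∈ Term.varsL e.1 ↔ n ∈ Term.varsL e.2

def RightReduced (R : TRS F) : Prop := ∀ e ∈ R, NormalForm R e.2

def AlmostLeftReduced (R : TRS F) : Prop :=
  ¬ ∃ (l₁ r₁ l₂ r₂ : Term F) (p : List Nat) (u : Term F) (σ : Nat → Term F),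
      (l₁, r₁) ∈ R ∧ (l₂, r₂) ∈ R ∧ p ≠ [] ∧ SubtermAt l₁ p u ∧ u = l₂.subst σ

def NonSubtermCollapsing (R : TRS F) : Prop :=
  ¬ ∃ (t u : Term F) (p : List Nat), p ≠ [] ∧ SubtermAt u p t ∧ Conv R t u

structure LMSystem (R : TRS F) : Prop where
  convergent : Convergent R
  almostLeftReduced : AlmostLeftReduced R
  rightReduced : RightReduced R
  nonCollapsing : NonSubtermCollapsing R
  forwardClosed : FCclosed R
  quasiDet : QuasiDet (RHSset R)

/-- the symbol (function symbol or variable) of a term at a position, if defined -/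
def labelAt {F : Type} : List Nat → Term F → Option (F ⊕ Nat)
  | [], t => some t.label
  | i :: p, Term.app _ ts => (ts[i]?).bind (labelAt p)
  | _ :: _, Term.var _ => none

/-- outermost distinguishing position -/
def ODP (s t : Term F) (p : List Nat) : Prop :=
  (labelAt p s ≠ none ∨ labelAt p t ≠ none) ∧
  labelAt p s ≠ labelAt p t ∧
  ∀ q, q <+: p → q ≠ p → labelAt q s = labelAt q t

/-!
Let `u` be a common normal form of `s` and `t`. Both terms are ε̄-irreducible, so by forward
closure each of `s →* u` and `t →* u` is either an equality or a single root step. When `s ≠ t`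
this exhibits `(s, t)` or `(t, s)` as an instance of an equation of `RHS(R)`: a rule of `R`, or,
when both sides step, the right-hand-side critical pair of the two rules, which exists because
the two right-hand sides are unifiable after renaming apart and hence have a most general
unifier. The roots of that equation are those of `l → r`, so quasi-determinism of `RHS(R)`
makes it `l → r` itself; this rules out the orientation `(t, s)`, and `(s, t)` is a root step
with `l → r`.
-/

namespace Term

@[induction_eliminator]
theorem induction {motive : Term F → Prop} (var : ∀ n, motive (var n))
    (app : ∀ f ts, (∀ t ∈ ts, motive t) → motive (app f ts)) : ∀ t, motive t
  | .var n => var n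
  | .app f ts => app f ts fun t _ => induction var app t

@[simp] theorem subst_var (σ : Nat → Term F) (n : Nat) : (var n).subst σ = σ n := by
  rw [subst]

@[simp] theorem subst_app (σ : Nat → Term F) (f : F) (ts : List (Term F)) :
    (app f ts).subst σ = app f (ts.map (subst σ)) := by
  rw [subst]; congr 1; exact List.attach_map_val

@[simp] theorem varsL_var (n : Nat) : (var n : Term F).varsL = [n] := by
  rw [varsL]

@[simp] theorem varsL_app (f : F) (ts : List (Term F)) :
    (app f ts).varsL = (ts.map varsL).flatten := by
  rw [varsL]; congr 1; exact List.attach_map_val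

@[simp] theorem mem_varsL_app {x : Nat} {f : F} {ts : List (Term F)} :
    x ∈ (app f ts).varsL ↔ ∃ u ∈ ts, x ∈ u.varsL := by
  simp only [varsL_app, List.mem_flatten, List.mem_map]
  exact ⟨fun ⟨_, ⟨u, hu, hl⟩, hx⟩ => ⟨u, hu, hl ▸ hx⟩, fun ⟨u, hu, hx⟩ => ⟨_, ⟨u, hu, rfl⟩, hx⟩⟩

theorem root_eq_of_subst_eq_app {t : Term F} (ht : ¬ t.IsVar) {σ : Nat → Term F} {f : F}
    {ts : List (Term F)} (h : t.subst σ = app f ts) : t.root = some f := by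
  cases t with
  | var n => exact absurd trivial ht
  | app g us => simp_all [root]

theorem subst_subst (σ τ : Nat → Term F) (t : Term F) :
    (t.subst σ).subst τ = t.subst fun x => (σ x).subst τ := by
  induction t with
  | var n => simp
  | app f ts ih => simpa using List.map_congr_left ih

theorem subst_congr {σ τ : Nat → Term F} {t : Term F} (h : ∀ x ∈ t.varsL, σ x = τ x) :
    t.subst σ = t.subst τ := by
  induction t with
  | var n => simpa using h
  | app f ts ih =>
    simpa using List.map_congr_left fun u hu =>
      ih u hu fun x hx => h x (mem_varsL_app.2 ⟨u, hu, hx⟩)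

theorem mem_varsL_subst {x : Nat} {σ : Nat → Term F} {t : Term F} :
    x ∈ (t.subst σ).varsL ↔ ∃ y ∈ t.varsL, x ∈ (σ y).varsL := by
  induction t with
  | var n => simp
  | app f ts ih =>
    simp only [subst_app, mem_varsL_app, List.mem_map]
    constructor
    · rintro ⟨_, ⟨u, hu, rfl⟩, hx⟩
      obtain ⟨y, hy, hxy⟩ := (ih u hu).1 hx
      exact ⟨y, ⟨u, hu, hy⟩, hxy⟩
    · rintro ⟨y, ⟨u, hu, hy⟩, hxy⟩
      exact ⟨_, ⟨u, hu, rfl⟩, (ih u hu).2 ⟨y, hy, hxy⟩⟩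

def size : Term F → Nat
  | var _ => 1
  | app _ ts => 1 + (ts.attach.map fun ⟨t, _⟩ => t.size).sum

theorem size_app (f : F) (ts : List (Term F)) : (app f ts).size = 1 + (ts.map size).sum := by
  rw [size]; congr 2; exact List.attach_map_val

theorem size_pos (t : Term F) : 0 < t.size := by
  cases t <;> simp [size]

theorem size_lt_of_mem {t : Term F} {ts : List (Term F)} (h : t ∈ ts) (f : F) :
    t.size < (app f ts).size := by
  have := List.le_sum_of_mem (List.mem_map_of_mem (f := size) h)
  rw [size_app]; omega

theorem size_le_size_subst {x : Nat} {σ : Nat → Term F} {t : Term F} (h : x ∈ t.varsL) :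
    (σ x).size ≤ (t.subst σ).size := by
  induction t with
  | var n => simp_all
  | app f ts ih =>
    obtain ⟨u, hu, hx⟩ := mem_varsL_app.1 h
    have hlt := size_lt_of_mem (List.mem_map_of_mem (f := subst σ) hu) f
    have hle := ih u hu hx
    rw [subst_app]
    omega

theorem subst_ne_of_mem_varsL {x : Nat} {t : Term F} (hx : x ∈ t.varsL) (ht : t ≠ var x)
    (σ : Nat → Term F) : σ x ≠ t.subst σ := by
  cases t with
  | var n => simp_all
  | app f ts =>
    obtain ⟨u, hu, hx⟩ := mem_varsL_app.1 hx
    intro h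
    have hlt := size_lt_of_mem (List.mem_map_of_mem (f := subst σ) hu) f
    have hle := size_le_size_subst (σ := σ) hx
    rw [← subst_app, ← h] at hlt
    omega

open Function

def unifiers (E : List (Term F × Term F)) : Set (Nat → Term F) :=
  {τ | ∀ e ∈ E, e.1.subst τ = e.2.subst τ}

def IsMostGeneral (σ : Nat → Term F) (U : Set (Nat → Term F)) : Prop :=
  σ ∈ U ∧ ∀ τ ∈ U, ∃ δ, ∀ x, τ x = (σ x).subst δ

def substEqns (σ : Nat → Term F) (E : List (Term F × Term F)) : List (Term F × Term F) :=
  E.map fun e => (e.1.subst σ, e.2.subst σ)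

theorem mem_unifiers_cons {τ : Nat → Term F} {e : Term F × Term F}
    {E : List (Term F × Term F)} :
    τ ∈ unifiers (e :: E) ↔ e.1.subst τ = e.2.subst τ ∧ τ ∈ unifiers E := by
  simp [unifiers]

theorem unifiers_cons_swap (a b : Term F) (E : List (Term F × Term F)) :
    unifiers ((a, b) :: E) = unifiers ((b, a) :: E) := by
  ext τ; simp only [mem_unifiers_cons, eq_comm]

theorem unifiers_cons_self (a : Term F) (E : List (Term F × Term F)) :
    unifiers ((a, a) :: E) = unifiers E := by
  ext τ; simp [mem_unifiers_cons]

theorem app_subst_eq_app_subst_iff {τ : Nat → Term F} {f g : F} {us vs : List (Term F)} :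
    (app f us).subst τ = (app g vs).subst τ ↔
      f = g ∧ us.length = vs.length ∧ ∀ e ∈ us.zip vs, e.1.subst τ = e.2.subst τ := by
  rw [subst_app, subst_app, app.injEq, ← List.forall₂_eq_eq_eq, List.forall₂_map_left_iff,
    List.forall₂_map_right_iff, List.forall₂_iff_zip, Prod.forall]

theorem unifiers_app_cons {f : F} {us vs : List (Term F)} (hlen : us.length = vs.length)
    (E : List (Term F × Term F)) :
    unifiers ((app f us, app f vs) :: E) = unifiers (us.zip vs ++ E) := by
  ext τ
  simp only [mem_unifiers_cons, app_subst_eq_app_subst_iff, hlen]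
  simp [unifiers, or_imp, forall_and]

theorem mem_unifiers_substEqns {τ σ : Nat → Term F} {E : List (Term F × Term F)} :
    τ ∈ unifiers (substEqns σ E) ↔ (fun y => (σ y).subst τ) ∈ unifiers E := by
  simp only [unifiers, substEqns, Set.mem_ofPred_eq, List.forall_mem_map, subst_subst]

theorem update_var_subst {x : Nat} {t : Term F} {τ : Nat → Term F} (h : τ x = t.subst τ) :
    (fun y => (update var x t y).subst τ) = τ := by
  funext y
  by_cases hy : y = x <;> simp [hy, h]

theorem mem_unifiers_elim {x : Nat} {t : Term F} {τ : Nat → Term F}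
    {E : List (Term F × Term F)} (h : τ ∈ unifiers ((var x, t) :: E)) :
    τ ∈ unifiers (substEqns (update var x t) E) := by
  rw [mem_unifiers_cons, subst_var] at h
  rw [mem_unifiers_substEqns, update_var_subst h.1]
  exact h.2

theorem isMostGeneral_elim {x : Nat} {t : Term F} {σ : Nat → Term F}
    {E : List (Term F × Term F)} (hx : x ∉ t.varsL)
    (hσ : IsMostGeneral σ (unifiers (substEqns (update var x t) E))) :
    IsMostGeneral (fun y => (update var x t y).subst σ) (unifiers ((var x, t) :: E)) := by
  refine ⟨mem_unifiers_cons.2 ⟨?_, mem_unifiers_substEqns.1 hσ.1⟩, fun τ hτ => ?_⟩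
  · refine (subst_var _ x).trans ((update_self x t var).symm ▸ subst_congr fun y hy => ?_)
    rw [update_of_ne (ne_of_mem_of_not_mem hy hx), subst_var]
  · obtain ⟨δ, hδ⟩ := hσ.2 τ (mem_unifiers_elim hτ)
    refine ⟨δ, fun y => ?_⟩
    have hτx : τ x = t.subst τ := by simpa using (mem_unifiers_cons.1 hτ).1
    rw [subst_subst, ← funext hδ]
    exact (congrFun (update_var_subst hτx) y).symm

def varsEqns (E : List (Term F × Term F)) : Finset Nat :=
  (E.flatMap fun e => e.1.varsL ++ e.2.varsL).toFinset

def sizeEqns (E : List (Term F × Term F)) : Nat :=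
  (E.map fun e => e.1.size + e.2.size).sum

theorem mem_varsEqns {x : Nat} {E : List (Term F × Term F)} :
    x ∈ varsEqns E ↔ ∃ e ∈ E, x ∈ e.1.varsL ∨ x ∈ e.2.varsL := by
  simp [varsEqns]

theorem varsEqns_cons_swap (a b : Term F) (E : List (Term F × Term F)) :
    varsEqns ((a, b) :: E) = varsEqns ((b, a) :: E) := by
  ext x; simp [mem_varsEqns, or_comm]

theorem varsEqns_subset_varsEqns_cons (e : Term F × Term F) (E : List (Term F × Term F)) :
    varsEqns E ⊆ varsEqns (e :: E) := by
  intro x; simp only [mem_varsEqns]; grind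

theorem varsEqns_zip_append_subset {f g : F} {us vs : List (Term F)}
    (E : List (Term F × Term F)) :
    varsEqns (us.zip vs ++ E) ⊆ varsEqns ((app f us, app g vs) :: E) := by
  intro x
  simp only [mem_varsEqns, List.mem_append, List.mem_cons]
  rintro ⟨e, he | he, hx⟩
  · have := List.of_mem_zip he
    exact ⟨_, .inl rfl, hx.imp (fun h => mem_varsL_app.2 ⟨_, this.1, h⟩)
      (fun h => mem_varsL_app.2 ⟨_, this.2, h⟩)⟩
  · exact ⟨e, .inr he, hx⟩

theorem mem_varsL_subst_update {x y : Nat} {t u : Term F} (hx : x ∉ t.varsL)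
    (hy : y ∈ (u.subst (update var x t)).varsL) : y ≠ x ∧ (y ∈ u.varsL ∨ y ∈ t.varsL) := by
  obtain ⟨z, hz, hyz⟩ := mem_varsL_subst.1 hy
  by_cases hzx : z = x
  · subst hzx
    rw [update_self] at hyz
    exact ⟨ne_of_mem_of_not_mem hyz hx, .inr hyz⟩
  · rw [update_of_ne hzx, varsL_var, List.mem_singleton] at hyz
    exact ⟨hyz ▸ hzx, .inl (hyz ▸ hz)⟩

theorem varsEqns_elim_subset {x : Nat} {t : Term F} (hx : x ∉ t.varsL)
    (E : List (Term F × Term F)) :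
    varsEqns (substEqns (update var x t) E) ⊆ (varsEqns ((var x, t) :: E)).erase x := by
  intro y hy
  simp only [mem_varsEqns, substEqns, List.mem_map] at hy
  obtain ⟨_, ⟨e, he, rfl⟩, hy⟩ := hy
  have key : ∀ u, u = e.1 ∨ u = e.2 → y ∈ (u.subst (update var x t)).varsL →
      y ∈ (varsEqns ((var x, t) :: E)).erase x := by
    rintro u hu hyu
    obtain ⟨hne, hyu | hyt⟩ := mem_varsL_subst_update hx hyu
    · refine Finset.mem_erase.2 ⟨hne, mem_varsEqns.2 ⟨e, List.mem_cons_of_mem _ he, ?_⟩⟩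
      exact hu.elim (· ▸ .inl hyu) (· ▸ .inr hyu)
    · exact Finset.mem_erase.2 ⟨hne, mem_varsEqns.2 ⟨_, List.mem_cons_self, .inr hyt⟩⟩
  exact hy.elim (key _ (.inl rfl)) (key _ (.inr rfl))

theorem card_varsEqns_elim_lt {x : Nat} {t : Term F} (hx : x ∉ t.varsL)
    (E : List (Term F × Term F)) :
    (varsEqns (substEqns (update var x t) E)).card < (varsEqns ((var x, t) :: E)).card :=
  (Finset.card_le_card (varsEqns_elim_subset hx E)).trans_lt <|
    Finset.card_erase_lt_of_mem (mem_varsEqns.2 ⟨_, List.mem_cons_self, .inl (by simp)⟩)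

theorem sizeEqns_lt_sizeEqns_cons (e : Term F × Term F) (E : List (Term F × Term F)) :
    sizeEqns E < sizeEqns (e :: E) := by
  have := size_pos e.1
  simp only [sizeEqns, List.map_cons, List.sum_cons]; omega

theorem sizeEqns_zip_le (us vs : List (Term F)) :
    sizeEqns (us.zip vs) ≤ (us.map size).sum + (vs.map size).sum := by
  induction us generalizing vs with
  | nil => simp [sizeEqns]
  | cons u us ih =>
    cases vs with
    | nil => simp [sizeEqns]
    | cons v vs =>
      have := ih vs
      simp only [sizeEqns, List.zip_cons_cons, List.map_cons, List.sum_cons] at *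
      omega

theorem sizeEqns_zip_append_lt {f g : F} (us vs : List (Term F)) (E : List (Term F × Term F)) :
    sizeEqns (us.zip vs ++ E) < sizeEqns ((app f us, app g vs) :: E) := by
  have := sizeEqns_zip_le us vs
  simp only [sizeEqns, List.map_append, List.sum_append, List.map_cons, List.sum_cons,
    size_app] at *
  omega

/-- Martelli–Montanari unification: eliminating a variable removes it from `varsEqns`; every other
step keeps `varsEqns` from growing and shrinks `sizeEqns`. -/
theorem exists_isMostGeneral_unifiers :
    ∀ E : List (Term F × Term F), (unifiers E).Nonempty → ∃ σ, IsMostGeneral σ (unifiers E)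
  | [], _ => ⟨var, by simp [unifiers], fun τ _ => ⟨τ, by simp⟩⟩
  | (var x, t) :: E, ⟨τ, hτ⟩ => by
    by_cases hx : x ∈ t.varsL
    · obtain rfl : t = var x :=
        by_contra fun ht =>
          subst_ne_of_mem_varsL hx ht τ (by simpa using (mem_unifiers_cons.1 hτ).1)
      rw [unifiers_cons_self] at hτ ⊢
      exact exists_isMostGeneral_unifiers E ⟨τ, hτ⟩
    · obtain ⟨σ, hσ⟩ := exists_isMostGeneral_unifiers (substEqns (update var x t) E)
        ⟨τ, mem_unifiers_elim hτ⟩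
      exact ⟨_, isMostGeneral_elim hx hσ⟩
  | (app f us, var y) :: E, ⟨τ, hτ⟩ => by
    rw [unifiers_cons_swap] at hτ ⊢
    have hy : y ∉ (app f us).varsL := fun hy =>
      subst_ne_of_mem_varsL hy (by simp) τ (by simpa using (mem_unifiers_cons.1 hτ).1)
    obtain ⟨σ, hσ⟩ := exists_isMostGeneral_unifiers (substEqns (update var y (app f us)) E)
      ⟨τ, mem_unifiers_elim hτ⟩
    exact ⟨_, isMostGeneral_elim hy hσ⟩
  | (app f us, app g vs) :: E, ⟨τ, hτ⟩ => by
    obtain ⟨rfl, hlen, -⟩ := app_subst_eq_app_subst_iff.1 (mem_unifiers_cons.1 hτ).1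
    rw [unifiers_app_cons hlen] at hτ ⊢
    exact exists_isMostGeneral_unifiers (us.zip vs ++ E) ⟨τ, hτ⟩
termination_by E => ((varsEqns E).card, sizeEqns E)
decreasing_by
  all_goals simp only [Prod.lex_def]
  · have := Finset.card_le_card (varsEqns_subset_varsEqns_cons (var x, t) E)
    have := sizeEqns_lt_sizeEqns_cons (var x, t) E
    omega
  · exact .inl (card_varsEqns_elim_lt hx E)
  · rw [varsEqns_cons_swap]
    exact .inl (card_varsEqns_elim_lt hy E)
  · have := Finset.card_le_card <|
      varsEqns_zip_append_subset (f := f) (g := g) (us := us) (vs := vs) E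
    have := sizeEqns_zip_append_lt (f := f) (g := g) us vs E
    omega

theorem exists_isMGU {τ : Nat → Term F} {s t : Term F} (h : Unifies τ s t) :
    ∃ σ, IsMGU σ s t := by
  have hU : unifiers [(s, t)] = {τ | Unifies τ s t} := by ext; simp [unifiers, Unifies]
  obtain ⟨σ, hσ, hgen⟩ := exists_isMostGeneral_unifiers [(s, t)] ⟨τ, hU ▸ h⟩
  rw [hU] at hσ hgen
  exact ⟨σ, hσ, hgen⟩

end Term

section Rewriting

variable {R : TRS F}

theorem RuleStep.of_subst {ρ : Rule F} {s t : Term F} {θ : Nat → Term F}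
    (hs : ρ.1.subst θ = s) (ht : ρ.2.subst θ = t) : RuleStep ρ s t :=
  ⟨θ, [], hs ▸ .here _, ht ▸ .here _ _⟩

theorem SubtermAt.eq_of_nil {t u : Term F} (h : SubtermAt t [] u) : t = u := by
  cases h; rfl

theorem ReplaceAt.eq_of_nil {t v w : Term F} (h : ReplaceAt t [] v w) : v = w := by
  cases h; rfl

theorem EpsIrreducible.rootStep_of_oneStep {s t : Term F} (hs : EpsIrreducible R s)
    (h : OneStep R s t) : RootStep R s t := by
  obtain ⟨ρ, hρ, σ, p, hsub, hrep⟩ := h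
  cases p with
  | nil => exact ⟨ρ, hρ, σ, hsub.eq_of_nil, hrep.eq_of_nil.symm⟩
  | cons i p =>
    exact absurd ⟨ρ, hρ, .of_subst rfl rfl⟩ (hs _ _ hsub (List.cons_ne_nil i p) _)

theorem NormalForm.eq_of_starRW {s t : Term F} (hs : NormalForm R s) (h : StarRW R s t) :
    s = t := by
  induction h with
  | refl => rfl
  | tail _ hstep ih => exact absurd (ih ▸ hstep) (hs _)

theorem Terminating.exists_nfof (hT : Terminating R) (s : Term F) : ∃ u, NFof R s u := by
  induction s using hT.induction with
  | _ s ih =>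
    by_cases hs : NormalForm R s
    · exact ⟨s, .refl, hs⟩
    · obtain ⟨t, hst⟩ := not_forall_not.1 hs
      obtain ⟨u, htu, hu⟩ := ih t hst
      exact ⟨u, .head hst htu, hu⟩

theorem Joinable.exists_nfof (hT : Terminating R) {s t : Term F} (h : Joinable R s t) :
    ∃ u, NFof R s u ∧ NFof R t u := by
  obtain ⟨w, hsw, htw⟩ := h
  obtain ⟨u, hwu, hu⟩ := hT.exists_nfof w
  exact ⟨u, ⟨hsw.trans hwu, hu⟩, ⟨htw.trans hwu, hu⟩⟩

theorem FCclosed.eq_or_rootStep (hFC : FCclosed R) {s u : Term F} (hs : EpsIrreducible R s)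
    (hu : NFof R s u) : s = u ∨ RootStep R s u := by
  by_cases hnf : NormalForm R s
  · exact .inl (hnf.eq_of_starRW hu.1)
  · exact .inr (hs.rootStep_of_oneStep (hFC s ⟨hs, hnf⟩ u hu))

end Rewriting

section CriticalPairs

variable {R : TRS F}

open Term

theorem exists_renaming_apart (N : Nat) (σ₁ σ₂ : Nat → Term F) :
    ∃ ρ τ : Nat → Term F, IsRenaming ρ ∧ (∀ x < N, τ x = σ₁ x) ∧ ∀ x, (ρ x).subst τ = σ₂ x :=
  ⟨fun x => var (x + N), fun x => if x < N then σ₁ x else σ₂ (x - N),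
    ⟨(· + N), add_left_injective N, fun _ => rfl⟩, fun _ hx => if_pos hx, fun x => by simp⟩

theorem exists_mem_rhsSet_of_rootSteps {s t u : Term F} (hs : RootStep R s u)
    (ht : RootStep R t u) (hst : s ≠ t) :
    ∃ e ∈ RHSset R, ∃ θ, e.1.subst θ = s ∧ e.2.subst θ = t := by
  obtain ⟨⟨l₁, r₁⟩, h₁, σ₁, rfl, rfl⟩ := hs
  obtain ⟨⟨l₂, r₂⟩, h₂, σ₂, rfl, hr⟩ := ht
  obtain ⟨N, hN⟩ : ∃ N, ∀ x ∈ l₁.varsL ++ r₁.varsL, x < N :=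
    ⟨_, fun x hx => Nat.lt_succ_of_le (List.le_sum_of_mem hx)⟩
  obtain ⟨ρ, τ, hρ, hτ₁, hτ₂⟩ := exists_renaming_apart N σ₁ σ₂
  have hl₁ : l₁.subst τ = l₁.subst σ₁ :=
    subst_congr fun x hx => hτ₁ x (hN x (List.mem_append_left _ hx))
  have hr₁ : r₁.subst τ = r₁.subst σ₁ :=
    subst_congr fun x hx => hτ₁ x (hN x (List.mem_append_right _ hx))
  have hρτ (w : Term F) : (w.subst ρ).subst τ = w.subst σ₂ := by
    rw [subst_subst, funext hτ₂]
  have hunif : Unifies τ r₁ (r₂.subst ρ) := by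
    rw [Unifies, hr₁, hρτ]; exact hr
  obtain ⟨σ, hσ⟩ := exists_isMGU hunif
  obtain ⟨δ, hδ⟩ := hσ.2 τ hunif
  have hσδ (w : Term F) : (w.subst σ).subst δ = w.subst τ := by
    rw [subst_subst, ← funext hδ]
  refine ⟨(l₁.subst σ, (l₂.subst ρ).subst σ),
    Set.mem_union_right _ ⟨l₁, r₁, l₂, r₂, ρ, σ, h₁, h₂, hρ, hσ, fun h => hst ?_, rfl⟩,
    δ, by simp only [hσδ, hl₁], by simp only [hσδ, hρτ]⟩
  rw [← hl₁, ← hρτ, ← hσδ, h, hσδ]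

theorem exists_mem_rhsSet_of_joinable (hT : Terminating R) (hFC : FCclosed R) {s t : Term F}
    (hs : EpsIrreducible R s) (ht : EpsIrreducible R t) (hj : Joinable R s t) (hst : s ≠ t) :
    ∃ e ∈ RHSset R, ∃ θ,
      (e.1.subst θ = s ∧ e.2.subst θ = t) ∨ (e.1.subst θ = t ∧ e.2.subst θ = s) := by
  obtain ⟨u, hsu, htu⟩ := hj.exists_nfof hT
  rcases hFC.eq_or_rootStep hs hsu with rfl | hsu' <;>
    rcases hFC.eq_or_rootStep ht htu with rfl | htu'
  · exact absurd rfl hst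
  · obtain ⟨ρ, hρ, θ, rfl, rfl⟩ := htu'
    exact ⟨ρ, Set.mem_union_left _ hρ, θ, .inr ⟨rfl, rfl⟩⟩
  · obtain ⟨ρ, hρ, θ, rfl, rfl⟩ := hsu'
    exact ⟨ρ, Set.mem_union_left _ hρ, θ, .inl ⟨rfl, rfl⟩⟩
  · obtain ⟨e, he, θ, h⟩ := exists_mem_rhsSet_of_rootSteps hsu' htu' hst
    exact ⟨e, he, θ, .inl h⟩

end CriticalPairs

theorem QuasiDet.eq_of_rootPairSimilar {E : TRS F} (hQ : QuasiDet E) {e₁ e₂ : Rule F}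
    (h₁ : e₁ ∈ E) (h₂ : e₂ ∈ E) (h : RootPairSimilar e₁ e₂) : e₁ = e₂ :=
  by_contra fun hne => hQ.2.2 e₁ h₁ e₂ h₂ hne h

/-- with a rule with root pair `(f, g)`, two epsilon-bar-irreducible terms
with these roots are joinable iff the first rewrites to the second in one step by that
rule. -/
theorem joinable_iff_one_step {F : Type} (R : TRS F) (hlm : LMSystem R)
    (l r : Term F) (hrule : (l, r) ∈ R)
    (f g : F) (hl : l.root = some f) (hr : r.root = some g)
    (ss ts : List (Term F))
    (hs : EpsIrreducible R (Term.app f ss)) (ht : EpsIrreducible R (Term.app g ts)) :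
    Joinable R (Term.app f ss) (Term.app g ts) ↔
      RuleStep (l, r) (Term.app f ss) (Term.app g ts) := by
  have hQ := hlm.quasiDet
  have hlr : (l, r) ∈ RHSset R := Set.mem_union_left _ hrule
  have hfg : f ≠ g := fun h => hQ.2.1 _ hlr (by rw [hl, hr, h])
  refine ⟨fun hj => ?_, fun h => ⟨_, .single ⟨(l, r), hrule, h⟩, .refl⟩⟩
  obtain ⟨e, he, θ, hθ⟩ := exists_mem_rhsSet_of_joinable hlm.convergent.2 hlm.forwardClosed
    hs ht hj fun h => hfg (Term.app.inj h).1
  obtain ⟨hnv₁, hnv₂⟩ := hQ.1 e he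
  rcases hθ with ⟨h₁, h₂⟩ | ⟨h₁, h₂⟩
  · obtain rfl : e = (l, r) := hQ.eq_of_rootPairSimilar he hlr <| .inl
      ⟨(Term.root_eq_of_subst_eq_app hnv₁ h₁).trans hl.symm,
        (Term.root_eq_of_subst_eq_app hnv₂ h₂).trans hr.symm⟩
    exact .of_subst h₁ h₂
  · obtain rfl : e = (l, r) := hQ.eq_of_rootPairSimilar he hlr <| .inr
      ⟨(Term.root_eq_of_subst_eq_app hnv₁ h₁).trans hr.symm,
        (Term.root_eq_of_subst_eq_app hnv₂ h₂).trans hl.symm⟩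
    exact (hfg (Option.some.inj (hl.symm.trans (Term.root_eq_of_subst_eq_app hnv₁ h₁)))).elim
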